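/- For the mean field XY model, if β ≤ 2 then the equation ρ = R(ρ), with R(ρ) = (∫_{-1}^1 u(1-u²)^{-1/2} e^{βuρ} du)/(∫_{-1}^1 (1-u²)^{-1/2} e^{βuρ} du), has ρ = 0 as its unique solution. -/

import Mathlib

/-!
Write `c = βρ`, `w u = (1 - u²)^(-1/2)` and `D = ∫ w e^{cu}`, `S = ∫ (1 - u²) w e^{cu}`.
Integrating by parts against `-√(1 - u²)` turns the numerator of `R` into `c S`, so a fixed point
satisfies `ρ (D - β S) = 0`. Integrating by parts against `-u √(1 - u²)`, whose derivative is
`(2u² - 1) w`, gives `D - 2 S = c ∫ u √(1 - u²) e^{cu} = ∫ cu sinh(cu) √(1 - u²)`, which is positive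
for `c ≠ 0`. Hence `D - β S ≥ D - 2 S > 0` when `β ≤ 2` and `ρ ≠ 0`.
-/

open MeasureTheory Real

/-- Mean of `U` under the measure on `[-1,1]` tilted by `e^{βuρ}` against `(1-u²)^{-1/2}du`. -/
noncomputable def Rf (β ρ : ℝ) : ℝ :=
  (∫ u in (-1:ℝ)..1, u * (1 - u ^ 2) ^ (-(1:ℝ)/2) * Real.exp (β * u * ρ)) /
  (∫ u in (-1:ℝ)..1, (1 - u ^ 2) ^ (-(1:ℝ)/2) * Real.exp (β * u * ρ))

open Set

theorem rpow_neg_one_div_two_eq_inv_sqrt (x : ℝ) : x ^ (-(1:ℝ)/2) = (√x)⁻¹ := by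
  rcases le_or_gt 0 x with hx | hx
  · rw [show -(1:ℝ)/2 = -(1/2) by ring, rpow_neg hx, ← sqrt_eq_rpow]
  · -- for `x < 0` both sides are junk zeros: `cos (-π/2) = 0` and `√x = 0`
    rw [rpow_def_of_neg hx, sqrt_eq_zero'.mpr hx.le, show -(1:ℝ)/2 * π = -(π/2) by ring, cos_neg,
      cos_pi_div_two, mul_zero, inv_zero]

theorem sqrt_eq_mul_inv_sqrt (x : ℝ) : √x = x * (√x)⁻¹ := by
  rw [← div_eq_mul_inv, div_sqrt]

theorem hasDerivAt_sqrt_one_sub_sq {x : ℝ} (hx : x ∈ Ioo (-1:ℝ) 1) :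
    HasDerivAt (fun u => √(1 - u ^ 2)) (-(x * (√(1 - x ^ 2))⁻¹)) x := by
  have hpos : 0 < 1 - x ^ 2 := by nlinarith [hx.1, hx.2]
  convert ((hasDerivAt_pow 2 x).const_sub 1).sqrt hpos.ne' using 1
  field_simp
  ring

theorem intervalIntegrable_inv_sqrt_one_sub_sq :
    IntervalIntegrable (fun u : ℝ => (√(1 - u ^ 2))⁻¹) volume (-1) 1 := by
  refine intervalIntegral.intervalIntegrable_deriv_of_nonneg continuous_arcsin.continuousOn
    (fun x hx => ?_) (fun x _ => by positivity)
  rw [min_eq_left (by norm_num), max_eq_right (by norm_num)] at hx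
  simpa [one_div] using hasDerivAt_arcsin hx.1.ne' hx.2.ne

theorem integral_exp_mul_eq_neg_mul_integral_of_hasDerivAt {F f : ℝ → ℝ} {a b : ℝ} (c : ℝ)
    (hF : ContinuousOn F (uIcc a b)) (hFf : ∀ x ∈ Ioo (min a b) (max a b), HasDerivAt F (f x) x)
    (hf : IntervalIntegrable f volume a b) (ha : F a = 0) (hb : F b = 0) :
    ∫ x in a..b, exp (c * x) * f x = -c * ∫ x in a..b, exp (c * x) * F x := by
  have hexp (x : ℝ) : HasDerivAt (fun x => exp (c * x)) (c * exp (c * x)) x := by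
    simpa [mul_comm] using ((hasDerivAt_id x).const_mul c).exp
  rw [intervalIntegral.integral_mul_deriv_eq_deriv_mul_of_hasDerivAt (by fun_prop) hF
    (fun x _ => hexp x) hFf (by apply Continuous.intervalIntegrable; fun_prop) hf, ha, hb]
  simp_rw [mul_assoc, intervalIntegral.integral_const_mul]
  ring

noncomputable def tiltedArcsineIntegral (c : ℝ) (p : ℝ → ℝ) : ℝ :=
  ∫ u in (-1:ℝ)..1, exp (c * u) * (p u * (√(1 - u ^ 2))⁻¹)

theorem Rf_eq_div (β ρ : ℝ) :
    Rf β ρ = tiltedArcsineIntegral (β * ρ) id / tiltedArcsineIntegral (β * ρ) 1 := by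
  simp only [Rf, tiltedArcsineIntegral, rpow_neg_one_div_two_eq_inv_sqrt, id, Pi.one_apply]
  congr 1 <;> congr 1 <;> funext u <;> ring_nf

theorem intervalIntegrable_tiltedArcsine (c : ℝ) {p : ℝ → ℝ} (hp : Continuous p) :
    IntervalIntegrable (fun u => exp (c * u) * (p u * (√(1 - u ^ 2))⁻¹)) volume (-1) 1 :=
  (intervalIntegrable_inv_sqrt_one_sub_sq.continuousOn_mul hp.continuousOn).continuousOn_mul
    (by fun_prop)

theorem tiltedArcsineIntegral_one_pos (c : ℝ) : 0 < tiltedArcsineIntegral c 1 := by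
  refine intervalIntegral.intervalIntegral_pos_of_pos_on
    (intervalIntegrable_tiltedArcsine c continuous_one) (fun u hu => ?_) (by norm_num)
  have : 0 < 1 - u ^ 2 := by nlinarith [hu.1, hu.2]
  simp only [Pi.one_apply]
  positivity

theorem tiltedArcsineIntegral_one_sub_sq_nonneg (c : ℝ) :
    0 ≤ tiltedArcsineIntegral c (fun u => 1 - u ^ 2) := by
  refine intervalIntegral.integral_nonneg (by norm_num) (fun u _ => ?_)
  rw [← sqrt_eq_mul_inv_sqrt]
  positivity

theorem tiltedArcsineIntegral_id (c : ℝ) :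
    tiltedArcsineIntegral c id = c * tiltedArcsineIntegral c (fun u => 1 - u ^ 2) := by
  rw [tiltedArcsineIntegral, integral_exp_mul_eq_neg_mul_integral_of_hasDerivAt c
    (F := fun u => -√(1 - u ^ 2)) (by fun_prop) (fun x hx => ?_)
    (intervalIntegrable_inv_sqrt_one_sub_sq.continuousOn_mul continuousOn_id) (by simp) (by simp)]
  · simp_rw [tiltedArcsineIntegral, ← sqrt_eq_mul_inv_sqrt, mul_neg, intervalIntegral.integral_neg,
      neg_mul_neg]
  · rw [min_eq_left (by norm_num), max_eq_right (by norm_num)] at hx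
    simpa using (hasDerivAt_sqrt_one_sub_sq hx).fun_neg

theorem tiltedArcsineIntegral_two_mul_sq_sub_one (c : ℝ) :
    tiltedArcsineIntegral c (fun u => 2 * u ^ 2 - 1)
      = c * ∫ u in (-1:ℝ)..1, exp (c * u) * (u * √(1 - u ^ 2)) := by
  rw [tiltedArcsineIntegral, integral_exp_mul_eq_neg_mul_integral_of_hasDerivAt c
    (F := fun u => -(u * √(1 - u ^ 2))) (by fun_prop) (fun x hx => ?_)
    (intervalIntegrable_inv_sqrt_one_sub_sq.continuousOn_mul (by fun_prop)) (by simp) (by simp)]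
  · simp_rw [mul_neg, intervalIntegral.integral_neg, neg_mul_neg]
  · rw [min_eq_left (by norm_num), max_eq_right (by norm_num)] at hx
    refine ((hasDerivAt_id' x).mul (hasDerivAt_sqrt_one_sub_sq hx)).fun_neg.congr_deriv ?_
    linear_combination -sqrt_eq_mul_inv_sqrt (1 - x ^ 2)

theorem mul_sinh_pos {x : ℝ} (hx : x ≠ 0) : 0 < x * sinh x := by
  rcases hx.lt_or_gt with hx | hx
  · exact mul_pos_of_neg_of_neg hx (sinh_neg_iff.mpr hx)
  · exact mul_pos hx (sinh_pos_iff.mpr hx)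

theorem mul_sinh_nonneg (x : ℝ) : 0 ≤ x * sinh x := by
  rcases eq_or_ne x 0 with rfl | hx
  · simp
  · exact (mul_sinh_pos hx).le

theorem integral_exp_mul_mul_sqrt_one_sub_sq (c : ℝ) :
    ∫ u in (-1:ℝ)..1, exp (c * u) * (u * √(1 - u ^ 2))
      = ∫ u in (-1:ℝ)..1, sinh (c * u) * (u * √(1 - u ^ 2)) := by
  have hneg : ∫ u in (-1:ℝ)..1, exp (-(c * u)) * (u * √(1 - u ^ 2))
      = -∫ u in (-1:ℝ)..1, exp (c * u) * (u * √(1 - u ^ 2)) := by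
    have h := intervalIntegral.integral_comp_neg (a := -1) (b := 1)
      (fun u => exp (-(c * u)) * (u * √(1 - u ^ 2)))
    simp only [neg_neg, neg_sq, neg_mul, mul_neg, intervalIntegral.integral_neg] at h
    linarith
  simp_rw [sinh_eq, div_mul_eq_mul_div, intervalIntegral.integral_div, sub_mul]
  rw [intervalIntegral.integral_sub (by apply Continuous.intervalIntegrable; fun_prop)
    (by apply Continuous.intervalIntegrable; fun_prop), hneg]
  ring

theorem mul_integral_exp_mul_mul_sqrt_one_sub_sq_pos {c : ℝ} (hc : c ≠ 0) :
    0 < c * ∫ u in (-1:ℝ)..1, exp (c * u) * (u * √(1 - u ^ 2)) := by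
  have hcont : Continuous fun u => c * u * sinh (c * u) * √(1 - u ^ 2) := by fun_prop
  have hint (a b : ℝ) := hcont.intervalIntegrable (μ := volume) a b
  calc 0 < (∫ u in (-1:ℝ)..0, c * u * sinh (c * u) * √(1 - u ^ 2))
          + ∫ u in (0:ℝ)..1, c * u * sinh (c * u) * √(1 - u ^ 2) := by
        refine add_pos_of_nonneg_of_pos (intervalIntegral.integral_nonneg (by norm_num)
          fun u _ => mul_nonneg (mul_sinh_nonneg _) (sqrt_nonneg _))
          (intervalIntegral.intervalIntegral_pos_of_pos_on (hint 0 1) (fun u hu => ?_) one_pos)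
        have : 0 < 1 - u ^ 2 := by nlinarith [hu.1, hu.2]
        exact mul_pos (mul_sinh_pos (mul_ne_zero hc hu.1.ne')) (sqrt_pos.mpr this)
    _ = c * ∫ u in (-1:ℝ)..1, exp (c * u) * (u * √(1 - u ^ 2)) := by
        rw [intervalIntegral.integral_add_adjacent_intervals (hint _ _) (hint _ _),
          integral_exp_mul_mul_sqrt_one_sub_sq, ← intervalIntegral.integral_const_mul]
        congr 1 with u
        ring

theorem tiltedArcsineIntegral_one_sub_two_mul_one_sub_sq (c : ℝ) :
    tiltedArcsineIntegral c 1 - 2 * tiltedArcsineIntegral c (fun u => 1 - u ^ 2)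
      = c * ∫ u in (-1:ℝ)..1, exp (c * u) * (u * √(1 - u ^ 2)) := by
  rw [← tiltedArcsineIntegral_two_mul_sq_sub_one, tiltedArcsineIntegral, tiltedArcsineIntegral,
    tiltedArcsineIntegral, ← intervalIntegral.integral_const_mul,
    ← intervalIntegral.integral_sub (intervalIntegrable_tiltedArcsine c continuous_one)
      ((intervalIntegrable_tiltedArcsine c (by fun_prop)).const_mul 2)]
  congr 1 with u
  simp only [Pi.one_apply]
  ring

/-- If `β ≤ 2` then `ρ = 0` is the unique solution of the mean field equation `ρ = R(ρ)`. -/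
theorem stmt2 (β : ℝ) (hβ : 0 < β) (hβ2 : β ≤ 2) :
    ∀ ρ : ℝ, ρ = Rf β ρ ↔ ρ = 0 := by
  intro ρ
  set D := tiltedArcsineIntegral (β * ρ) 1
  set S := tiltedArcsineIntegral (β * ρ) (fun u => 1 - u ^ 2)
  have hS : 0 ≤ S := tiltedArcsineIntegral_one_sub_sq_nonneg _
  rw [Rf_eq_div, tiltedArcsineIntegral_id, eq_div_iff (tiltedArcsineIntegral_one_pos _).ne']
  refine ⟨fun hfix => by_contra fun hρ => ?_, fun hρ => by simp [hρ]⟩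
  have hgap : 0 < D - 2 * S := by
    rw [tiltedArcsineIntegral_one_sub_two_mul_one_sub_sq]
    exact mul_integral_exp_mul_mul_sqrt_one_sub_sq_pos (mul_ne_zero hβ.ne' hρ)
  have hDS : D = β * S := mul_left_cancel₀ hρ (by linarith)
  linarith [mul_le_mul_of_nonneg_right hβ2 hS]
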